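/- Let G be a 3-regular graph with vertex set V and edge set E'. Construct a delegation graph with: a vertex voter for each v ∈ V, an edge voter for each e ∈ E' with edges to the vertex voters of e's endpoints, a dummy voter D_v for each v ∈ V with an edge from the vertex voter of v to D_v, and two extra voters pointing only to each D_v. Dummy voters have voting cost 0, all other voters have voting cost 1; all delegating costs are 0. Then G has a vertex cover of size at most k if and only if this cLD election has a feasible solution of cost at most k in which every casting voter has voting power (number of represented voters plus themself) at most 4. -/

import Mathlib

/-! From a vertex cover `S`, let the vertex voters of `S` and all dummy voters cast, every edge
voter delegate to an endpoint in `S` and everyone else to their dummy voter: a vertex voter then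
represents at most its three incident edges, a dummy voter at most its vertex voter and its two
extra voters, and the cost is `|S|`.

Conversely, dummy voters have no outgoing edge, so they cast. Charge each other casting voter
(cost 1) to the vertex it belongs to, an edge voter to either endpoint. An edge voter that does
not cast delegates to an endpoint `u`; if the vertex voter of `u` delegates too, then one of the
extra voters of `u` must cast, since otherwise the dummy voter of `u` represents five voters. So
the charged vertices form a cover of size at most the cost. -/

/-- One delegation step along the selected edge. -/
def dStep {α : Type} (Dn : α → Option α) (a b : α) : Prop := Dn a = some b

/-- Voting power of a casting voter `j`: the number of voters whose delegation
path leads to `j` (including `j` itself). -/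
noncomputable def votingPower {α : Type} (Dn : α → Option α) (j : α) : ℕ :=
  Set.ncard {i | Relation.ReflTransGen (dStep Dn) i j}

/-- Voters of the Bounded Power reduction from Vertex Cover on a 3-regular
graph `G`: a vertex voter per vertex of `G`, an edge voter per edge of `G`, a
dummy voter per vertex of `G`, and two extra voters per dummy voter. -/
inductive W (V : Type) (G : SimpleGraph V) where
  | vert : V → W V G
  | edg : G.edgeSet → W V G
  | dum : V → W V G
  | extra : V → Bool → W V G
deriving DecidableEq

/-- Delegation edges of the reduction: each edge voter points to the vertex
voters of its two endpoints, each vertex voter points to its dummy voter, and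
the two extra voters attached to a dummy voter point to it. -/
inductive WEdge {V : Type} (G : SimpleGraph V) : W V G → W V G → Prop
  | ev (e : G.edgeSet) (u : V) (h : u ∈ (e : Sym2 V)) : WEdge G (.edg e) (.vert u)
  | vd (u : V) : WEdge G (.vert u) (.dum u)
  | xd (u : V) (b : Bool) : WEdge G (.extra u b) (.dum u)

/-- Voting cost: dummy voters vote for free, everyone else at cost 1.
(All delegating costs are 0.) -/
def wCost {V : Type} {G : SimpleGraph V} : W V G → ℕ
  | .dum _ => 0
  | _ => 1

open Relation

instance {V : Type} [Finite V] {G : SimpleGraph V} : Finite (W V G) :=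
  have : Finite G.edgeSet := Subtype.finite
  Finite.of_injective
    (fun w : W V G => match w with
      | .vert u => Sum.inl u
      | .edg e => Sum.inr (Sum.inl e)
      | .dum u => Sum.inr (Sum.inr (Sum.inl u))
      | .extra u b => (Sum.inr (Sum.inr (Sum.inr (u, b))) : V ⊕ G.edgeSet ⊕ V ⊕ V × Bool))
    (by rintro ⟨⟩ ⟨⟩ h <;> simp_all)

section Delegation

variable {α : Type} {Dn : α → Option α} {i j : α}

lemma setOf_reflTransGen_dStep_eq_insert (hj : ∀ i, Dn i = some j → ∀ h, Dn h ≠ some i) :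
    {i | ReflTransGen (dStep Dn) i j} = insert j {i | Dn i = some j} := by
  ext i
  refine ⟨fun hij => ?_, ?_⟩
  · rcases hij.cases_tail with rfl | ⟨c, hic, hcj⟩
    · exact Set.mem_insert _ _
    · rcases hic.cases_tail with rfl | ⟨d, _, hdc⟩
      · exact Set.mem_insert_of_mem _ hcj
      · exact (hj c hcj d hdc).elim
  · rintro (rfl | hij)
    · exact ReflTransGen.refl
    · exact ReflTransGen.single hij

lemma votingPower_le_ncard_add_one (hj : ∀ i, Dn i = some j → ∀ h, Dn h ≠ some i) :
    votingPower Dn j ≤ {i | Dn i = some j}.ncard + 1 := by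
  rw [votingPower, setOf_reflTransGen_dStep_eq_insert hj]
  exact Set.ncard_insert_le _ _

lemma ncard_le_votingPower [Finite α] {s : Set α} (hs : ∀ i ∈ s, ReflTransGen (dStep Dn) i j) :
    s.ncard ≤ votingPower Dn j :=
  Set.ncard_le_ncard hs

end Delegation

lemma SimpleGraph.ncard_incident_edgeSet_eq_degree {V : Type} [Fintype V]
    (G : SimpleGraph V) [DecidableRel G.Adj] (u : V) :
    {e : G.edgeSet | u ∈ (e : Sym2 V)}.ncard = G.degree u := by
  classical
  have himg : Subtype.val '' {e : G.edgeSet | u ∈ (e : Sym2 V)} = G.incidenceSet u := by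
    ext x
    simp [SimpleGraph.incidenceSet, and_comm]
  rw [← Set.ncard_image_of_injective _ Subtype.val_injective, himg,
    Set.ncard_eq_toFinset_card', Set.toFinset_card, G.card_incidenceSet_eq_degree]

section Forward

variable {V : Type} [DecidableEq V] {G : SimpleGraph V} (S : Finset V) (f : G.edgeSet → V)

def coverDelegation : W V G → Option (W V G)
  | .vert u => if u ∈ S then none else some (.dum u)
  | .edg e => some (.vert (f e))
  | .dum _ => none
  | .extra u _ => some (.dum u)

def coverCasting [Fintype V] : Finset (W V G) :=
  S.image .vert ∪ Finset.univ.image .dum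

variable {S f}

lemma coverDelegation_eq_none_iff [Fintype V] {i : W V G} :
    coverDelegation S f i = none ↔ i ∈ coverCasting S := by
  rcases i with u | e | u | ⟨u, b⟩ <;> simp [coverDelegation, coverCasting]

lemma wEdge_of_coverDelegation_eq_some (hf : ∀ e : G.edgeSet, f e ∈ (e : Sym2 V)) {i j : W V G}
    (hij : coverDelegation S f i = some j) : WEdge G i j := by
  rcases i with u | e | u | ⟨u, b⟩ <;> simp only [coverDelegation] at hij
  · split_ifs at hij
    cases hij
    exact .vd u
  · cases hij
    exact .ev e (f e) (hf e)
  · cases hij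
  · cases hij
    exact .xd u b

lemma exists_coverDelegation_eq_some_mem [Fintype V] (hfS : ∀ e, f e ∈ S) {i : W V G}
    (hi : i ∉ coverCasting S) : ∃ j ∈ coverCasting S, coverDelegation S f i = some j := by
  rcases i with u | e | u | ⟨u, b⟩ <;> simp_all [coverDelegation, coverCasting]

lemma sum_wCost_coverCasting [Fintype V] : ∑ i ∈ coverCasting (G := G) S, wCost i = S.card := by
  have hdisj : Disjoint (S.image W.vert) (Finset.univ.image (W.dum (G := G))) := by
    simp [Finset.disjoint_left]
  rw [coverCasting, Finset.sum_union hdisj, Finset.sum_image (fun _ _ _ _ h => W.vert.inj h),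
    Finset.sum_image (fun _ _ _ _ h => W.dum.inj h)]
  simp [wCost]

lemma votingPower_coverDelegation_vert_le [Fintype V] [DecidableRel G.Adj]
    (hdeg : ∀ u, G.degree u ≤ 3) (hf : ∀ e : G.edgeSet, f e ∈ (e : Sym2 V)) (u : V) :
    votingPower (coverDelegation S f) (.vert u) ≤ 4 := by
  have hpre : {i | coverDelegation S f i = some (.vert u)} ⊆
      W.edg '' {e : G.edgeSet | u ∈ (e : Sym2 V)} := by
    intro i hi
    rcases i with w | e | w | ⟨w, b⟩ <;> simp [coverDelegation] at hi
    exact ⟨e, hi ▸ hf e, rfl⟩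
  calc votingPower (coverDelegation S f) (.vert u)
      ≤ {i | coverDelegation S f i = some (.vert u)}.ncard + 1 := by
        refine votingPower_le_ncard_add_one fun i hi h hh => ?_
        rcases i with w | e | w | ⟨w, b⟩ <;> simp [coverDelegation] at hi
        rcases h with w | e' | w | ⟨w, b⟩ <;> simp [coverDelegation] at hh
    _ ≤ {e : G.edgeSet | u ∈ (e : Sym2 V)}.ncard + 1 := by
        grw [Set.ncard_le_ncard hpre, Set.ncard_image_of_injective _ fun _ _ => W.edg.inj]
    _ ≤ 4 := by
        rw [G.ncard_incident_edgeSet_eq_degree]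
        linarith [hdeg u]

lemma votingPower_coverDelegation_dum_le (hfS : ∀ e, f e ∈ S) (u : V) :
    votingPower (coverDelegation S f) (.dum u) ≤ 4 := by
  have hpre : {i | coverDelegation S f i = some (.dum u)} ⊆
      ({.vert u, .extra u true, .extra u false} : Finset (W V G)) := by
    intro i hi
    rcases i with w | e | w | ⟨w, b⟩ <;> simp [coverDelegation] at hi
    · simp [hi.2]
    · cases b <;> simp [hi]
  calc votingPower (coverDelegation S f) (.dum u)
      ≤ {i | coverDelegation S f i = some (.dum u)}.ncard + 1 := by
        refine votingPower_le_ncard_add_one fun i hi h hh => ?_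
        rcases i with w | e | w | ⟨w, b⟩ <;> simp [coverDelegation] at hi
        · obtain ⟨huS, rfl⟩ := hi
          rcases h with w | e | w | ⟨w, b⟩ <;> simp [coverDelegation] at hh
          exact huS (hh ▸ hfS e)
        · rcases h with w | e | w | ⟨w, b⟩ <;> simp [coverDelegation] at hh
    _ ≤ 3 + 1 := by
        grw [Set.ncard_le_ncard hpre, Set.ncard_coe_finset, Finset.card_le_three]

end Forward

section Backward

variable {V : Type} {G : SimpleGraph V} {C : Finset (W V G)} {Dn : W V G → Option (W V G)}

noncomputable def W.vertex : W V G → V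
  | .vert u | .dum u | .extra u _ => u
  | .edg e => (e : Sym2 V).out.1

lemma sum_wCost_eq_card_filter (C : Finset (W V G)) :
    ∑ i ∈ C, wCost i = (C.filter (wCost · = 1)).card := by
  rw [Finset.card_filter]
  refine Finset.sum_congr rfl fun i _ => ?_
  rcases i with u | e | u | ⟨u, b⟩ <;> rfl

lemma exists_wEdge_of_notMem (hC : ∀ i, Dn i = none ↔ i ∈ C)
    (hD : ∀ i j, Dn i = some j → WEdge G i j) {i : W V G} (hi : i ∉ C) :
    ∃ j, Dn i = some j ∧ WEdge G i j := by
  rcases h : Dn i with _ | j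
  · exact absurd ((hC i).1 h) hi
  · exact ⟨j, rfl, hD i j h⟩

lemma dum_mem (hC : ∀ i, Dn i = none ↔ i ∈ C) (hD : ∀ i j, Dn i = some j → WEdge G i j)
    (u : V) : .dum u ∈ C := by
  by_contra hu
  obtain ⟨_, _, h⟩ := exists_wEdge_of_notMem hC hD hu
  cases h

lemma exists_extra_mem_of_delegates_to_vert [Finite V] (hC : ∀ i, Dn i = none ↔ i ∈ C)
    (hD : ∀ i j, Dn i = some j → WEdge G i j) {u : V} {e : G.edgeSet}
    (hpow : votingPower Dn (.dum u) ≤ 4) (hu : .vert u ∉ C) (he : Dn (.edg e) = some (.vert u)) :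
    ∃ b, .extra u b ∈ C := by
  by_contra! hx
  have hvd : dStep Dn (.vert u) (.dum u) := by
    obtain ⟨_, h, hw⟩ := exists_wEdge_of_notMem hC hD hu
    cases hw
    exact h
  have hxd (b : Bool) : dStep Dn (.extra u b) (.dum u) := by
    obtain ⟨_, h, hw⟩ := exists_wEdge_of_notMem hC hD (hx b)
    cases hw
    exact h
  have hfive : ({.dum u, .vert u, .edg e, .extra u true, .extra u false} : Set (W V G)).ncard
      = 5 := by
    rw [Set.ncard_insert_of_notMem, Set.ncard_insert_of_notMem, Set.ncard_insert_of_notMem,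
      Set.ncard_insert_of_notMem, Set.ncard_singleton] <;> simp
  have hreach : 5 ≤ votingPower Dn (.dum u) := by
    refine hfive ▸ ncard_le_votingPower ?_
    rintro i (rfl | rfl | rfl | rfl | rfl)
    · exact .refl
    · exact .single hvd
    · exact .head he (.single hvd)
    · exact .single (hxd true)
    · exact .single (hxd false)
  omega

theorem exists_vertexCover_of_votingPower_le_four [Finite V] (hC : ∀ i, Dn i = none ↔ i ∈ C)
    (hD : ∀ i j, Dn i = some j → WEdge G i j) (hpow : ∀ j ∈ C, votingPower Dn j ≤ 4) :
    ∃ S : Finset V, S.card ≤ ∑ i ∈ C, wCost i ∧ ∀ e ∈ G.edgeSet, ∃ u ∈ S, u ∈ e := by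
  classical
  set S := (C.filter (wCost · = 1)).image W.vertex
  have hmem {i : W V G} (hi : i ∈ C) (h1 : wCost i = 1) : i.vertex ∈ S :=
    Finset.mem_image_of_mem _ (Finset.mem_filter.2 ⟨hi, h1⟩)
  refine ⟨S, (sum_wCost_eq_card_filter C).symm ▸ Finset.card_image_le, fun e he => ?_⟩
  by_cases heC : .edg ⟨e, he⟩ ∈ C
  · exact ⟨_, hmem heC rfl, Sym2.out_fst_mem e⟩
  obtain ⟨_, hDe, hw⟩ := exists_wEdge_of_notMem hC hD heC
  cases hw with | ev _ u hu => ?_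
  refine ⟨u, ?_, hu⟩
  by_cases huC : .vert u ∈ C
  · exact hmem huC rfl
  obtain ⟨b, hb⟩ := exists_extra_mem_of_delegates_to_vert hC hD (hpow _ (dum_mem hC hD u)) huC hDe
  exact hmem hb rfl

end Backward

theorem vertex_cover_iff_bounded_power_general {V : Type} [Fintype V]
    (G : SimpleGraph V) [DecidableRel G.Adj] (hreg : ∀ u : V, G.degree u = 3)
    (k : ℕ) :
    (∃ S : Finset V, S.card ≤ k ∧ ∀ e ∈ G.edgeSet, ∃ u ∈ S, u ∈ e) ↔
    (∃ (C : Finset (W V G)) (Dn : W V G → Option (W V G)),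
      (∀ i, Dn i = none ↔ i ∈ C) ∧
      (∀ i j, Dn i = some j → WEdge G i j) ∧
      (∀ i, i ∉ C → ∃ j ∈ C, Relation.ReflTransGen (dStep Dn) i j) ∧
      (∑ i ∈ C, wCost i) ≤ k ∧
      (∀ j ∈ C, votingPower Dn j ≤ 4)) := by
  classical
  constructor
  · rintro ⟨S, hSk, hcov⟩
    choose f hfS hf using fun e : G.edgeSet => hcov e e.2
    refine ⟨coverCasting S, coverDelegation S f, fun _ => coverDelegation_eq_none_iff,
      fun _ _ => wEdge_of_coverDelegation_eq_some hf, fun _ hi => ?_,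
      sum_wCost_coverCasting.trans_le hSk, fun j hj => ?_⟩
    · obtain ⟨j, hj, hij⟩ := exists_coverDelegation_eq_some_mem hfS hi
      exact ⟨j, hj, .single hij⟩
    · simp only [coverCasting, Finset.mem_union, Finset.mem_image] at hj
      rcases hj with ⟨u, -, rfl⟩ | ⟨u, -, rfl⟩
      · exact votingPower_coverDelegation_vert_le (fun u => (hreg u).le) hf u
      · exact votingPower_coverDelegation_dum_le hfS u
  · rintro ⟨C, Dn, hC, hD, -, hcost, hpow⟩
    obtain ⟨S, hS, hcov⟩ := exists_vertexCover_of_votingPower_le_four hC hD hpow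
    exact ⟨S, hS.trans hcost, hcov⟩

/-- A 3-regular graph `G` has a vertex cover of size at most `k` iff the cLD
election of the reduction has a feasible solution of cost at most `k` in which
every casting voter has voting power at most 4. -/
theorem vertex_cover_iff_bounded_power {V : Type} [Fintype V] [DecidableEq V]
    (G : SimpleGraph V) [DecidableRel G.Adj] (hreg : ∀ u : V, G.degree u = 3)
    (k : ℕ) :
    (∃ S : Finset V, S.card ≤ k ∧ ∀ e ∈ G.edgeSet, ∃ u ∈ S, u ∈ e) ↔
    (∃ (C : Finset (W V G)) (Dn : W V G → Option (W V G)),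
      (∀ i, Dn i = none ↔ i ∈ C) ∧
      (∀ i j, Dn i = some j → WEdge G i j) ∧
      (∀ i, i ∉ C → ∃ j ∈ C, Relation.ReflTransGen (dStep Dn) i j) ∧
      (∑ i ∈ C, wCost i) ≤ k ∧
      (∀ j ∈ C, votingPower Dn j ≤ 4)) :=
  vertex_cover_iff_bounded_power_general G hreg k
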